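/- Let A, B, T be abelian groups, let c : A × B → T be a function, and let P₀ ∈ A satisfy 2·P₀ = 0. Assume c(P, Q) = c(P + P₀, −Q) for all P ∈ A, Q ∈ B. Define z(P, Q) = c(P, Q) − c(P, 0) − c(0, Q) + c(0, 0), and assume z is biadditive (additive in each variable separately). Then for all P ∈ A and Q ∈ B one has 2·z(P, Q) = (c(P₀, Q) − c(0, Q)) + z(P₀, −Q). -/

import Mathlib

/-!
Invariance of `c` under `(P, Q) ↦ (P + P₀, -Q)` together with additivity of `z` in `P` gives
`z (P, Q) = z (P + P₀, -Q) - z (P₀, -Q) = z (P, -Q)`, while additivity in `Q` gives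
`z (P, -Q) = -z (P, Q)`. Hence `z` is `2`-torsion, and both sides of the identity vanish:
the right-hand side is `z (P₀, Q) + z (P₀, -Q)` because `c (P₀, 0) = c (0, 0)`.
-/

theorem apply_neg_right_of_add_right {A B T : Type*} [AddCommGroup B] [AddCommGroup T]
    {f : A × B → T} (hright : ∀ P : A, ∀ Q Q' : B, f (P, Q + Q') = f (P, Q) + f (P, Q'))
    (P : A) (Q : B) :
    f (P, -Q) = -f (P, Q) :=
  (AddMonoidHom.mk' (fun Q => f (P, Q)) (hright P)).map_neg Q

section

variable {A B T : Type*} [AddCommGroup A] [AddCommGroup B] [AddCommGroup T]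

def mixedDiff (c : A × B → T) (x : A × B) : T :=
  c x - c (x.1, 0) - c (0, x.2) + c (0, 0)

variable {c : A × B → T} {P₀ : A}

theorem mixedDiff_eq_sub_of_invariant (hinv : ∀ P : A, ∀ Q : B, c (P, Q) = c (P + P₀, -Q))
    (P : A) (Q : B) :
    mixedDiff c (P, Q) = mixedDiff c (P + P₀, -Q) - mixedDiff c (P₀, -Q) := by
  simp only [mixedDiff]
  rw [hinv P Q, hinv P 0, hinv 0 Q, hinv 0 0]
  simp only [zero_add, neg_zero]
  abel

theorem sub_zero_left_eq_mixedDiff_of_invariant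
    (hinv : ∀ P : A, ∀ Q : B, c (P, Q) = c (P + P₀, -Q)) (Q : B) :
    c (P₀, Q) - c (0, Q) = mixedDiff c (P₀, Q) := by
  have hc : c (0, 0) = c (P₀, 0) := by simpa using hinv 0 0
  rw [mixedDiff, hc]
  abel

theorem two_nsmul_mixedDiff_eq_zero_of_invariant
    (hinv : ∀ P : A, ∀ Q : B, c (P, Q) = c (P + P₀, -Q))
    (hleft : ∀ P P' : A, ∀ Q : B,
      mixedDiff c (P + P', Q) = mixedDiff c (P, Q) + mixedDiff c (P', Q))
    (hright : ∀ P : A, ∀ Q Q' : B,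
      mixedDiff c (P, Q + Q') = mixedDiff c (P, Q) + mixedDiff c (P, Q'))
    (P : A) (Q : B) :
    2 • mixedDiff c (P, Q) = 0 := by
  have hsymm : mixedDiff c (P, Q) = mixedDiff c (P, -Q) := by
    rw [mixedDiff_eq_sub_of_invariant hinv, hleft, add_sub_cancel_right]
  calc 2 • mixedDiff c (P, Q) = mixedDiff c (P, Q) + mixedDiff c (P, -Q) := by
        rw [two_nsmul, ← hsymm]
    _ = 0 := by rw [apply_neg_right_of_add_right hright, add_neg_cancel]

end

theorem stmt_2_general {A B T : Type*} [AddCommGroup A] [AddCommGroup B] [AddCommGroup T]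
    (c : A × B → T) (P₀ : A)
    (hinv : ∀ P : A, ∀ Q : B, c (P, Q) = c (P + P₀, -Q))
    (z : A × B → T)
    (hz : ∀ P : A, ∀ Q : B, z (P, Q) = c (P, Q) - c (P, 0) - c (0, Q) + c (0, 0))
    (hleft : ∀ P P' : A, ∀ Q : B, z (P + P', Q) = z (P, Q) + z (P', Q))
    (hright : ∀ P : A, ∀ Q Q' : B, z (P, Q + Q') = z (P, Q) + z (P, Q')) :
    ∀ P : A, ∀ Q : B,
      2 • z (P, Q) = (c (P₀, Q) - c (0, Q)) + z (P₀, -Q) := by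
  obtain rfl : z = mixedDiff c := funext fun x => hz x.1 x.2
  intro P Q
  rw [two_nsmul_mixedDiff_eq_zero_of_invariant hinv hleft hright,
    sub_zero_left_eq_mixedDiff_of_invariant hinv, apply_neg_right_of_add_right hright,
    add_neg_cancel]

/-- the identity combining equations (1) and (2) in the proof of the
main theorem for bielliptic surfaces of Type 1.  With `c` invariant under the
Type 1 action, `P₀` a 2-torsion element, and
`z (P, Q) = c (P, Q) - c (P, 0) - c (0, Q) + c (0, 0)` biadditive, one has
`2 • z (P, Q) = (c (P₀, Q) - c (0, Q)) + z (P₀, -Q)`. -/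
theorem stmt_2 {A B T : Type*} [AddCommGroup A] [AddCommGroup B] [AddCommGroup T]
    (c : A × B → T) (P₀ : A) (hP₀ : 2 • P₀ = 0)
    (hinv : ∀ P : A, ∀ Q : B, c (P, Q) = c (P + P₀, -Q))
    (z : A × B → T)
    (hz : ∀ P : A, ∀ Q : B, z (P, Q) = c (P, Q) - c (P, 0) - c (0, Q) + c (0, 0))
    (hleft : ∀ P P' : A, ∀ Q : B, z (P + P', Q) = z (P, Q) + z (P', Q))
    (hright : ∀ P : A, ∀ Q Q' : B, z (P, Q + Q') = z (P, Q) + z (P, Q')) :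
    ∀ P : A, ∀ Q : B,
      2 • z (P, Q) = (c (P₀, Q) - c (0, Q)) + z (P₀, -Q) :=
  stmt_2_general c P₀ hinv z hz hleft hright
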